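/- arXiv:2305.01870 — 6 statements merged into one kernel-verified Lean document; each statement's English description precedes it below -/
import Mathlib

section
/- (Sklar's theorem, existence, bivariate case) Let A and B be real-valued random variables on a common probability space with joint CDF H(a,b) = P(A ≤ a, B ≤ b) and marginal CDFs Φ_A and Φ_B. Then there exists a 2-copula C such that H(a,b) = C(Φ_A(a), Φ_B(b)) for all a, b ∈ ℝ. -/
open MeasureTheory

/-- A `2`-copula, modeled as a function `C : ℝ → ℝ → ℝ` whose defining properties are
required on the unit square `[0,1]²`: `C u v ∈ [0,1]`; `C u 0 = C 0 v = 0`;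
`C u 1 = u` and `C 1 v = v`; and `C` is 2-increasing:
`C u₂ v₂ - C u₂ v₁ - C u₁ v₂ + C u₁ v₁ ≥ 0` whenever `u₁ ≤ u₂` and `v₁ ≤ v₂`. -/
def IsCopula2 (C : ℝ → ℝ → ℝ) : Prop :=
  (∀ u ∈ Set.Icc (0:ℝ) 1, ∀ v ∈ Set.Icc (0:ℝ) 1, C u v ∈ Set.Icc (0:ℝ) 1) ∧
  (∀ u ∈ Set.Icc (0:ℝ) 1, C u 0 = 0) ∧
  (∀ v ∈ Set.Icc (0:ℝ) 1, C 0 v = 0) ∧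
  (∀ u ∈ Set.Icc (0:ℝ) 1, C u 1 = u) ∧
  (∀ v ∈ Set.Icc (0:ℝ) 1, C 1 v = v) ∧
  (∀ u₁ u₂ v₁ v₂ : ℝ, u₁ ∈ Set.Icc (0:ℝ) 1 → u₂ ∈ Set.Icc (0:ℝ) 1 →
    v₁ ∈ Set.Icc (0:ℝ) 1 → v₂ ∈ Set.Icc (0:ℝ) 1 → u₁ ≤ u₂ → v₁ ≤ v₂ →
    0 ≤ C u₂ v₂ - C u₂ v₁ - C u₁ v₂ + C u₁ v₁)

/-!
Randomize the jumps of the marginal CDFs (Rüschendorf's distributional transform). For `X` with law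
`ρ` and `V` uniform on `[0,1]` independent of `X`, the variable `U = ρ(-∞, X) + V ρ{X}` is uniform
on `[0,1]`: if `q` is a quantile of level `u`, i.e. `ρ(-∞, q) ≤ u ≤ ρ(-∞, q]`, then
`{U < u} ⊆ {X < q} ∪ {X = q, V ρ{q} ≤ u - ρ(-∞, q)} ⊆ {U ≤ u}` and the middle event has
probability `u`; as this holds at every level, `P(U ≤ u) = u`. Moreover `{X ≤ a} ⊆ {U ≤ ρ(-∞, a]}`
and both events have probability `ρ(-∞, a]`, so they agree almost surely. Hence the joint
distribution function of `(U_A, U_B)` has uniform marginals, so it is a copula, and at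
`(Φ_A a, Φ_B b)` it equals `P(A ≤ a, B ≤ b)`.
-/

open Set Filter Topology unitInterval

namespace ProbabilityTheory

section JointCdf

variable {α : Type*} [MeasurableSpace α] {ν : Measure α} [IsProbabilityMeasure ν] {U V : α → ℝ}

lemma measureReal_le_and_le_one (hV : Measurable V) (hV1 : ν.real {p | V p ≤ 1} = 1) (u : ℝ) :
    ν.real {p | U p ≤ u ∧ V p ≤ 1} = ν.real {p | U p ≤ u} := by
  have hnull : ν {p | V p ≤ 1}ᶜ = 0 := by
    rw [prob_compl_eq_zero_iff (measurableSet_le hV measurable_const), ← ofReal_measureReal, hV1,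
      ENNReal.ofReal_one]
  simp only [measureReal_def, ofPred_and, measure_inter_conull hnull]

lemma isCopula2_measureReal_le_and_le (hU : Measurable U) (hV : Measurable V)
    (hU_unif : ∀ u ∈ Icc (0:ℝ) 1, ν.real {p | U p ≤ u} = u)
    (hV_unif : ∀ v ∈ Icc (0:ℝ) 1, ν.real {p | V p ≤ v} = v) :
    IsCopula2 fun u v => ν.real {p | U p ≤ u ∧ V p ≤ v} := by
  have h0 : (0:ℝ) ∈ Icc (0:ℝ) 1 := left_mem_Icc.2 zero_le_one
  have h1 : (1:ℝ) ∈ Icc (0:ℝ) 1 := right_mem_Icc.2 zero_le_one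
  refine ⟨fun u _ v _ => ⟨measureReal_nonneg, measureReal_le_one⟩, fun u _ => ?_, fun v _ => ?_,
    fun u hu => ?_, fun v hv => ?_, ?_⟩
  · exact le_antisymm ((measureReal_mono fun p hp => hp.2).trans (hV_unif 0 h0).le)
      measureReal_nonneg
  · exact le_antisymm ((measureReal_mono fun p hp => hp.1).trans (hU_unif 0 h0).le)
      measureReal_nonneg
  · dsimp only
    rw [measureReal_le_and_le_one hV (hV_unif 1 h1), hU_unif u hu]
  · simp_rw [and_comm (a := U _ ≤ 1)]
    rw [measureReal_le_and_le_one hU (hU_unif 1 h1), hV_unif v hv]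
  · intro u₁ u₂ v₁ v₂ _ _ _ _ hu hv
    let R : ℝ → ℝ → Set α := fun u v => {p | U p ≤ u ∧ V p ≤ v}
    have hR : MeasurableSet (R u₁ v₂) :=
      (measurableSet_le hU measurable_const).inter (measurableSet_le hV measurable_const)
    have hinter : R u₂ v₁ ∩ R u₁ v₂ = R u₁ v₁ := by
      ext p
      simp only [R, mem_inter_iff, mem_ofPred_eq]
      constructor
      · rintro ⟨⟨-, hpv⟩, hpu, -⟩
        exact ⟨hpu, hpv⟩
      · rintro ⟨hpu, hpv⟩
        exact ⟨⟨hpu.trans hu, hpv⟩, hpu, hpv.trans hv⟩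
    have hunion : R u₂ v₁ ∪ R u₁ v₂ ⊆ R u₂ v₂ := by
      rintro p (⟨hpu, hpv⟩ | ⟨hpu, hpv⟩)
      exacts [⟨hpu, hpv.trans hv⟩, ⟨hpu.trans hu, hpv⟩]
    have := measureReal_union_add_inter (μ := ν) (s := R u₂ v₁) hR
    rw [hinter] at this
    linarith [measureReal_mono (μ := ν) hunion]

end JointCdf

lemma exists_measureReal_Iio_le_le_measureReal_Iic (ρ : Measure ℝ) [IsProbabilityMeasure ρ]
    {u : ℝ} (hu₀ : 0 < u) (hu₁ : u < 1) : ∃ q, ρ.real (Iio q) ≤ u ∧ u ≤ ρ.real (Iic q) := by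
  set S := {x | u ≤ cdf ρ x}
  have hS : S.Nonempty := ((tendsto_cdf_atTop ρ).eventually (eventually_ge_nhds hu₁)).exists
  obtain ⟨b, hb⟩ := eventually_atBot.1 ((tendsto_cdf_atBot ρ).eventually (eventually_lt_nhds hu₀))
  have hSb : BddBelow S := ⟨b, fun x hx => le_of_not_ge fun hxb => (hb x hxb).not_ge hx⟩
  refine ⟨sInf S, ?_, ?_⟩
  · have hlt : ∀ x < sInf S, cdf ρ x ≤ u := fun x hx =>
      le_of_not_ge (notMem_of_lt_csInf (s := S) hx hSb)
    have hleft : Function.leftLim (cdf ρ) (sInf S) ≤ u :=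
      le_of_tendsto ((cdf ρ).mono.tendsto_leftLim _) (eventually_nhdsWithin_of_forall hlt)
    rw [measureReal_def, ← measure_cdf ρ, (cdf ρ).measure_Iio (tendsto_cdf_atBot ρ), sub_zero,
      ENNReal.toReal_ofReal']
    exact max_le hleft hu₀.le
  · have hgt : ∀ x > sInf S, u ≤ cdf ρ x := fun x hx => by
      obtain ⟨s, hs, hsx⟩ := exists_lt_of_csInf_lt hS hx
      exact hs.trans ((cdf ρ).mono hsx.le)
    rw [← ProbabilityTheory.cdf_eq_real]
    exact ge_of_tendsto (((cdf ρ).right_continuous _).mono Ioi_subset_Ici_self)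
      (eventually_nhdsWithin_of_forall hgt)

lemma ofReal_mul_volume_setOf_mul_le {m c : ℝ} (hc : 0 ≤ c) (hcm : c ≤ m) :
    ENNReal.ofReal m * volume {v : I | (v : ℝ) * m ≤ c} = ENNReal.ofReal c := by
  rcases (hc.trans hcm).eq_or_lt with rfl | hm
  · simp [le_antisymm hcm hc]
  let t : I := ⟨c / m, div_nonneg hc hm.le, div_le_one_of_le₀ hcm hm.le⟩
  have ht : {v : I | (v : ℝ) * m ≤ c} = Iic t := by
    ext v
    rw [mem_ofPred_eq, mem_Iic, ← Subtype.coe_le_coe, le_div_iff₀ hm]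
  rw [ht, volume_Iic, ← ENNReal.ofReal_mul hm.le, mul_div_cancel₀ _ hm.ne']

def randomizedCdf (ρ : Measure ℝ) (x : ℝ) (v : I) : ℝ := ρ.real (Iio x) + v * ρ.real {x}

section DistribTransform

variable (ρ : Measure ℝ)

lemma measurable_randomizedCdf [IsFiniteMeasure ρ] :
    Measurable (Function.uncurry (randomizedCdf ρ)) := by
  have hatom : (fun x => ρ.real {x}) = fun x => ρ.real (Iic x) - ρ.real (Iio x) := by
    ext x
    rw [← Iic_sdiff_Iio_same, measureReal_sdiff Iio_subset_Iic_self measurableSet_Iio]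
  have hIio : Measurable fun x => ρ.real (Iio x) :=
    (show Monotone fun x => ρ.real (Iio x) from
      fun _ _ h => measureReal_mono (Iio_subset_Iio h)).measurable
  have hIic : Measurable fun x => ρ.real (Iic x) :=
    (show Monotone fun x => ρ.real (Iic x) from
      fun _ _ h => measureReal_mono (Iic_subset_Iic.2 h)).measurable
  have hatom_meas : Measurable fun x => ρ.real {x} := hatom ▸ hIic.sub hIio
  exact (hIio.comp measurable_fst).add
    ((measurable_subtype_coe.comp measurable_snd).mul (hatom_meas.comp measurable_fst))

variable {ρ}

lemma measureReal_Iio_le_randomizedCdf (x : ℝ) (v : I) :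
    ρ.real (Iio x) ≤ randomizedCdf ρ x v :=
  le_add_of_nonneg_right (mul_nonneg v.2.1 measureReal_nonneg)

lemma randomizedCdf_le_measureReal_Iic [IsFiniteMeasure ρ] (x : ℝ) (v : I) :
    randomizedCdf ρ x v ≤ ρ.real (Iic x) := by
  rw [← Iio_union_right, measureReal_union (by simp) (measurableSet_singleton x)]
  exact add_le_add le_rfl (mul_le_of_le_one_left measureReal_nonneg v.2.2)

lemma measureReal_randomizedCdf_lt_le_and_le_measureReal_randomizedCdf_le
    [IsFiniteMeasure ρ] {q u : ℝ} (hq₁ : ρ.real (Iio q) ≤ u) (hq₂ : u ≤ ρ.real (Iic q)) :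
    (ρ.prod volume).real {p | randomizedCdf ρ p.1 p.2 < u} ≤ u ∧
      u ≤ (ρ.prod volume).real {p | randomizedCdf ρ p.1 p.2 ≤ u} := by
  set c := u - ρ.real (Iio q)
  let P : Set (ℝ × I) := Iio q ×ˢ univ ∪ {q} ×ˢ {v : I | (v : ℝ) * ρ.real {q} ≤ c}
  have hatom : c ≤ ρ.real {q} := by
    rw [← Iio_union_right, measureReal_union (by simp) (measurableSet_singleton q)] at hq₂
    linarith
  have hc : 0 ≤ c := sub_nonneg.2 hq₁
  have hatom_part : (ρ.prod volume).real ({q} ×ˢ {v : I | (v : ℝ) * ρ.real {q} ≤ c}) = c := by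
    rw [measureReal_def, Measure.prod_prod, ← ofReal_measureReal (μ := ρ),
      ofReal_mul_volume_setOf_mul_le hc hatom, ENNReal.toReal_ofReal hc]
  have hP : (ρ.prod volume).real P = u := by
    rw [measureReal_union (by simp) ((measurableSet_singleton q).prod
      (measurableSet_le (by fun_prop) measurable_const)), hatom_part, measureReal_prod_prod,
      probReal_univ, mul_one, add_sub_cancel]
  have hP_sub : P ⊆ {p | randomizedCdf ρ p.1 p.2 ≤ u} := by
    rintro ⟨x, v⟩ (⟨hx, -⟩ | ⟨rfl, hv⟩)
    · exact (randomizedCdf_le_measureReal_Iic x v).trans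
        ((measureReal_mono (Iic_subset_Iio.2 hx)).trans hq₁)
    · simp only [mem_ofPred_eq, randomizedCdf] at hv ⊢
      linarith
  have hsub_P : {p | randomizedCdf ρ p.1 p.2 < u} ⊆ P := by
    rintro ⟨x, v⟩ hxv
    rcases lt_trichotomy x q with hx | rfl | hx
    · exact Or.inl ⟨hx, trivial⟩
    · refine Or.inr ⟨rfl, ?_⟩
      simp only [mem_ofPred_eq, randomizedCdf] at hxv ⊢
      linarith
    · exact absurd hxv (not_lt.2 <| hq₂.trans <| (measureReal_mono (Iic_subset_Iio.2 hx)).trans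
        (measureReal_Iio_le_randomizedCdf x v))
  exact ⟨(measureReal_mono hsub_P).trans_eq hP, hP.symm.trans_le (measureReal_mono hP_sub)⟩

variable [IsProbabilityMeasure ρ]

lemma measureReal_randomizedCdf_le {u : ℝ} (hu : u ∈ Icc (0:ℝ) 1) :
    (ρ.prod volume).real {p | randomizedCdf ρ p.1 p.2 ≤ u} = u := by
  refine le_antisymm ?_ ?_
  · rcases hu.2.eq_or_lt with rfl | hu₁
    · exact measureReal_le_one
    refine le_of_forall_gt_imp_ge_of_dense fun w hw => ?_
    rcases lt_or_ge w 1 with hw₁ | hw₁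
    · obtain ⟨q, hq₁, hq₂⟩ :=
        exists_measureReal_Iio_le_le_measureReal_Iic ρ (hu.1.trans_lt hw) hw₁
      exact (measureReal_mono fun p hp => lt_of_le_of_lt hp hw).trans
        (measureReal_randomizedCdf_lt_le_and_le_measureReal_randomizedCdf_le hq₁ hq₂).1
    · exact measureReal_le_one.trans hw₁
  · rcases hu.1.eq_or_lt with rfl | hu₀
    · exact measureReal_nonneg
    rcases hu.2.eq_or_lt with rfl | hu₁
    · have huniv : {p : ℝ × I | randomizedCdf ρ p.1 p.2 ≤ 1} = univ :=
        eq_univ_of_forall fun p =>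
          (randomizedCdf_le_measureReal_Iic p.1 p.2).trans measureReal_le_one
      rw [huniv, probReal_univ]
    obtain ⟨q, hq₁, hq₂⟩ := exists_measureReal_Iio_le_le_measureReal_Iic ρ hu₀ hu₁
    exact (measureReal_randomizedCdf_lt_le_and_le_measureReal_randomizedCdf_le hq₁ hq₂).2

lemma randomizedCdf_le_measureReal_Iic_ae_eq (a : ℝ) :
    {p : ℝ × I | randomizedCdf ρ p.1 p.2 ≤ ρ.real (Iic a)} =ᵐ[ρ.prod volume]
      Iic a ×ˢ univ := by
  refine (ae_eq_of_subset_of_measure_ge (fun p hp => ?_) ?_ (measurableSet_Iic.prod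
    MeasurableSet.univ).nullMeasurableSet (measure_ne_top _ _)).symm
  · exact (randomizedCdf_le_measureReal_Iic p.1 p.2).trans
      (measureReal_mono (Iic_subset_Iic.2 hp.1))
  · rw [← ofReal_measureReal, ← ofReal_measureReal, measureReal_randomizedCdf_le
      ⟨measureReal_nonneg, measureReal_le_one⟩, measureReal_prod_prod, probReal_univ, mul_one]

end DistribTransform

section RandomVariable

variable {Ω : Type*} [MeasurableSpace Ω]

noncomputable def distribTransform (μ : Measure Ω) (X : Ω → ℝ) (p : Ω × I) : ℝ :=
  randomizedCdf (μ.map X) (X p.1) p.2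

variable {μ : Measure Ω} {X : Ω → ℝ}

lemma measurePreserving_prodMap_id {β : Type*} [MeasurableSpace β] [SFinite μ] {ν : Measure β}
    [SFinite ν] (hX : Measurable X) :
    MeasurePreserving (Prod.map X id) (μ.prod ν) ((μ.map X).prod ν) :=
  (hX.measurePreserving μ).prod (MeasurePreserving.id ν)

variable [IsProbabilityMeasure μ]

lemma measurable_distribTransform (hX : Measurable X) : Measurable (distribTransform μ X) := by
  have := Measure.isProbabilityMeasure_map (μ := μ) hX.aemeasurable
  exact (measurable_randomizedCdf _).comp (hX.prodMap measurable_id)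

lemma measureReal_distribTransform_le (hX : Measurable X) {u : ℝ} (hu : u ∈ Icc (0:ℝ) 1) :
    (μ.prod volume).real {p | distribTransform μ X p ≤ u} = u := by
  have := Measure.isProbabilityMeasure_map (μ := μ) hX.aemeasurable
  exact ((measurePreserving_prodMap_id hX).measureReal_preimage
    (measurableSet_le (measurable_randomizedCdf (μ.map X)) measurable_const).nullMeasurableSet).trans
    (measureReal_randomizedCdf_le hu)

lemma distribTransform_le_ae_eq (hX : Measurable X) (a : ℝ) :
    {p | distribTransform μ X p ≤ μ.real {ω | X ω ≤ a}} =ᵐ[μ.prod volume]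
      {ω | X ω ≤ a} ×ˢ univ := by
  have := Measure.isProbabilityMeasure_map (μ := μ) hX.aemeasurable
  rw [show μ.real {ω | X ω ≤ a} = (μ.map X).real (Iic a) from
    (map_measureReal_apply hX measurableSet_Iic).symm]
  exact (measurePreserving_prodMap_id hX).quasiMeasurePreserving.preimage_ae_eq
    (randomizedCdf_le_measureReal_Iic_ae_eq a)

end RandomVariable

end ProbabilityTheory

open ProbabilityTheory

/-- **Sklar's theorem (existence, bivariate case).** For real-valued random variables
`A`, `B` on a common probability space with joint CDF `H(a,b) = P(A ≤ a, B ≤ b)` and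
marginal CDFs `ΦA`, `ΦB`, there exists a 2-copula `C` such that
`H(a,b) = C (ΦA a) (ΦB b)` for all `a b : ℝ`. -/
theorem sklar_existence
    {Ω : Type*} [MeasurableSpace Ω] (μ : Measure Ω) [IsProbabilityMeasure μ]
    (A B : Ω → ℝ) (hA : Measurable A) (hB : Measurable B)
    (ΦA ΦB : ℝ → ℝ)
    (hΦA : ∀ x : ℝ, ΦA x = (μ {ω | A ω ≤ x}).toReal)
    (hΦB : ∀ x : ℝ, ΦB x = (μ {ω | B ω ≤ x}).toReal) :
    ∃ C : ℝ → ℝ → ℝ, IsCopula2 C ∧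
      ∀ a b : ℝ, (μ {ω | A ω ≤ a ∧ B ω ≤ b}).toReal = C (ΦA a) (ΦB b) := by
  refine ⟨fun u v => (μ.prod volume).real
      {p | distribTransform μ A p ≤ u ∧ distribTransform μ B p ≤ v},
    isCopula2_measureReal_le_and_le (measurable_distribTransform hA)
      (measurable_distribTransform hB) (fun u => measureReal_distribTransform_le hA)
      (fun v => measureReal_distribTransform_le hB), fun a b => ?_⟩
  simp only [hΦA, hΦB, ← measureReal_def, ofPred_and]
  rw [measureReal_congr ((distribTransform_le_ae_eq hA a).inter (distribTransform_le_ae_eq hB b)),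
    prod_inter_prod, inter_univ, measureReal_prod_prod, probReal_univ, mul_one]
end

section
/- (Sklar's theorem, uniqueness, bivariate case) Let A and B be real-valued random variables on a common probability space with joint CDF H(a,b) = P(A ≤ a, B ≤ b) and marginal CDFs Φ_A and Φ_B, and suppose Φ_A and Φ_B are continuous. If C₁ and C₂ are 2-copulas such that H(a,b) = C₁(Φ_A(a), Φ_B(b)) = C₂(Φ_A(a), Φ_B(b)) for all a, b ∈ ℝ, then C₁ = C₂ on all of [0,1]². -/
open MeasureTheory

/-- Intermediate value auxiliary lemma. -/
lemma exists_eq_of_tendsto {Φ : ℝ → ℝ} (hcont : Continuous Φ)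
    (h0 : Filter.Tendsto Φ Filter.atBot (nhds 0))
    (h1 : Filter.Tendsto Φ Filter.atTop (nhds 1))
    {u : ℝ} (hu : u ∈ Set.Ioo (0:ℝ) 1) : ∃ a, Φ a = u := by
  obtain ⟨a, ha⟩ := (h1.eventually (eventually_gt_nhds hu.2)).exists
  obtain ⟨b, hb⟩ := (h0.eventually (eventually_lt_nhds hu.1)).exists
  exact intermediate_value_univ b a hcont ⟨hb.le, ha.le⟩

lemma cdf_tendsto {Ω : Type*} [MeasurableSpace Ω] (μ : Measure Ω) [IsProbabilityMeasure μ]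
    (A : Ω → ℝ) (hA : Measurable A) (Φ : ℝ → ℝ)
    (hΦ : ∀ x : ℝ, Φ x = (μ {ω | A ω ≤ x}).toReal) :
    Filter.Tendsto Φ Filter.atBot (nhds 0) ∧ Filter.Tendsto Φ Filter.atTop (nhds 1) := by
  have hmap : IsProbabilityMeasure (μ.map A) := Measure.isProbabilityMeasure_map hA.aemeasurable
  have heq : Φ = ProbabilityTheory.cdf (μ.map A) := by
    funext x
    rw [ProbabilityTheory.cdf_eq_real, measureReal_def, Measure.map_apply hA measurableSet_Iic, hΦ]
    rfl
  rw [heq]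
  exact ⟨ProbabilityTheory.tendsto_cdf_atBot _, ProbabilityTheory.tendsto_cdf_atTop _⟩

/-- **Sklar's theorem (uniqueness, bivariate case).** Let `A`, `B` be real-valued
random variables on a common probability space with joint CDF
`H(a,b) = P(A ≤ a, B ≤ b)` and *continuous* marginal CDFs `ΦA`, `ΦB`. If `C₁` and
`C₂` are 2-copulas with `H(a,b) = C₁ (ΦA a) (ΦB b) = C₂ (ΦA a) (ΦB b)` for all
`a b : ℝ`, then `C₁ = C₂` on all of `[0,1]²`. -/
theorem sklar_uniqueness
    {Ω : Type*} [MeasurableSpace Ω] (μ : Measure Ω) [IsProbabilityMeasure μ]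
    (A B : Ω → ℝ) (hA : Measurable A) (hB : Measurable B)
    (ΦA ΦB : ℝ → ℝ)
    (hΦA : ∀ x : ℝ, ΦA x = (μ {ω | A ω ≤ x}).toReal)
    (hΦB : ∀ x : ℝ, ΦB x = (μ {ω | B ω ≤ x}).toReal)
    (hContA : Continuous ΦA) (hContB : Continuous ΦB)
    (C₁ C₂ : ℝ → ℝ → ℝ) (hC₁ : IsCopula2 C₁) (hC₂ : IsCopula2 C₂)
    (hSklar₁ : ∀ a b : ℝ, (μ {ω | A ω ≤ a ∧ B ω ≤ b}).toReal = C₁ (ΦA a) (ΦB b))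
    (hSklar₂ : ∀ a b : ℝ, (μ {ω | A ω ≤ a ∧ B ω ≤ b}).toReal = C₂ (ΦA a) (ΦB b)) :
    ∀ u ∈ Set.Icc (0:ℝ) 1, ∀ v ∈ Set.Icc (0:ℝ) 1, C₁ u v = C₂ u v := by
  obtain ⟨hA0, hA1⟩ := cdf_tendsto μ A hA ΦA hΦA
  obtain ⟨hB0, hB1⟩ := cdf_tendsto μ B hB ΦB hΦB
  intro u hu v hv
  rcases eq_or_lt_of_le hu.1 with h0u | h0u
  · rw [← h0u, hC₁.2.2.1 v hv, hC₂.2.2.1 v hv]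
  rcases eq_or_lt_of_le hu.2 with h1u | h1u
  · rw [h1u, hC₁.2.2.2.2.1 v hv, hC₂.2.2.2.2.1 v hv]
  rcases eq_or_lt_of_le hv.1 with h0v | h0v
  · rw [← h0v, hC₁.2.1 u hu, hC₂.2.1 u hu]
  rcases eq_or_lt_of_le hv.2 with h1v | h1v
  · rw [h1v, hC₁.2.2.2.1 u hu, hC₂.2.2.2.1 u hu]
  obtain ⟨a, ha⟩ := exists_eq_of_tendsto hContA hA0 hA1 ⟨h0u, h1u⟩
  obtain ⟨b, hb⟩ := exists_eq_of_tendsto hContB hB0 hB1 ⟨h0v, h1v⟩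
  rw [← ha, ← hb, ← hSklar₁ a b, hSklar₂ a b]
end

section
/- (Deterministic CDF-composition bound) Let Φ_A, Φ_B : ℝ → [0,1] and Φ_A⁽ⁿ⁾, Φ_B⁽ⁿ⁾ : ℝ → [0,1] be nondecreasing functions, let ε ≥ 0, and suppose |Φ_A⁽ⁿ⁾(x) − Φ_A(x)| ≤ ε and |Φ_B⁽ⁿ⁾(x) − Φ_B(x)| ≤ ε for all x ∈ ℝ. Then for every p ∈ (0,1) such that (Φ_A⁽ⁿ⁾ − ε)^{-1}(p) is finite: Φ_B⁽ⁿ⁾((Φ_A⁽ⁿ⁾ + ε)^{-1}(p)) − ε ≤ Φ_B(Φ_A^{-1}(p)) ≤ Φ_B⁽ⁿ⁾((Φ_A⁽ⁿ⁾ − ε)^{-1}(p)) + ε. -/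
/-- The generalized inverse `H⁻¹(p) = inf {x : ℝ | H x ≥ p}` of a function `H : ℝ → ℝ`,
valued in the extended reals so that the convention `inf ∅ = +∞` holds. -/
noncomputable def geninvE (H : ℝ → ℝ) (p : ℝ) : EReal :=
  sInf ((fun x : ℝ => (x : EReal)) '' {x : ℝ | p ≤ H x})

/-- Evaluation of a (bounded, nondecreasing) function `H : ℝ → ℝ` at an extended real:
at a finite point it is `H` itself, at `-∞` it is `inf (range H)` and at `+∞` it is
`sup (range H)` (the natural monotone extension). -/
noncomputable def evalE (H : ℝ → ℝ) (x : EReal) : ℝ :=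
  if x = ⊥ then sInf (Set.range H) else if x = ⊤ then sSup (Set.range H) else H x.toReal


lemma evalE_bot (H : ℝ → ℝ) : evalE H ⊥ = sInf (Set.range H) := by simp [evalE]

lemma evalE_top (H : ℝ → ℝ) : evalE H ⊤ = sSup (Set.range H) := by simp [evalE]

lemma evalE_coe (H : ℝ → ℝ) (x : ℝ) : evalE H (x : EReal) = H x := by
  simp [evalE]

lemma evalE_mono (H : ℝ → ℝ) (hH : Monotone H) (hr : ∀ x, H x ∈ Set.Icc (0:ℝ) 1) :
    Monotone (evalE H) := by
  have hne : (Set.range H).Nonempty := ⟨H 0, 0, rfl⟩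
  have hbb : BddBelow (Set.range H) := ⟨0, fun y ⟨x, hx⟩ => hx ▸ (hr x).1⟩
  have hba : BddAbove (Set.range H) := ⟨1, fun y ⟨x, hx⟩ => hx ▸ (hr x).2⟩
  intro a b hab
  induction a using EReal.rec with
  | bot =>
    induction b using EReal.rec with
    | bot => exact le_refl _
    | coe x => rw [evalE_bot, evalE_coe]; exact csInf_le hbb ⟨x, rfl⟩
    | top => rw [evalE_bot, evalE_top]; exact csInf_le_csSup hne hbb hba
  | coe x =>
    induction b using EReal.rec with
    | bot => exact absurd hab (by simp)
    | coe y =>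
      rw [evalE_coe, evalE_coe]
      exact hH (by exact_mod_cast hab)
    | top => rw [evalE_coe, evalE_top]; exact le_csSup hba ⟨x, rfl⟩
  | top =>
    induction b using EReal.rec with
    | bot => exact absurd hab (by simp)
    | coe y => exact absurd hab (by simp)
    | top => exact le_refl _

lemma evalE_band (H1 H2 : ℝ → ℝ) (ε : ℝ)
    (hr1 : ∀ x, H1 x ∈ Set.Icc (0:ℝ) 1) (hr2 : ∀ x, H2 x ∈ Set.Icc (0:ℝ) 1)
    (h : ∀ x, H1 x ≤ H2 x + ε) (e : EReal) : evalE H1 e ≤ evalE H2 e + ε := by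
  have hne1 : (Set.range H1).Nonempty := ⟨H1 0, 0, rfl⟩
  have hne2 : (Set.range H2).Nonempty := ⟨H2 0, 0, rfl⟩
  have hbb1 : BddBelow (Set.range H1) := ⟨0, fun y ⟨x, hx⟩ => hx ▸ (hr1 x).1⟩
  have hba2 : BddAbove (Set.range H2) := ⟨1, fun y ⟨x, hx⟩ => hx ▸ (hr2 x).2⟩
  induction e using EReal.rec with
  | bot =>
    rw [evalE_bot, evalE_bot]
    rw [← sub_le_iff_le_add]
    apply le_csInf hne2
    rintro b ⟨x, rfl⟩
    have := csInf_le hbb1 (⟨x, rfl⟩ : H1 x ∈ Set.range H1)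
    linarith [h x]
  | coe x =>
    rw [evalE_coe, evalE_coe]; exact h x
  | top =>
    rw [evalE_top, evalE_top]
    apply csSup_le hne1
    rintro b ⟨x, rfl⟩
    have := le_csSup hba2 (⟨x, rfl⟩ : H2 x ∈ Set.range H2)
    linarith [h x]

lemma geninvE_anti (H1 H2 : ℝ → ℝ) (h : ∀ x, H1 x ≤ H2 x) (p : ℝ) :
    geninvE H2 p ≤ geninvE H1 p :=
  sInf_le_sInf (Set.image_mono (fun x hx => le_trans hx (h x)))

/-- **Deterministic CDF-composition bound.** Let `ΦA ΦB ΦAn ΦBn : ℝ → [0,1]` be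
nondecreasing, `ε ≥ 0`, with `|ΦAn x - ΦA x| ≤ ε` and `|ΦBn x - ΦB x| ≤ ε` for all `x`.
Then for every `p ∈ (0,1)` such that `(ΦAn - ε)⁻¹(p)` is finite:
`ΦBn ((ΦAn + ε)⁻¹(p)) - ε ≤ ΦB (ΦA⁻¹(p)) ≤ ΦBn ((ΦAn - ε)⁻¹(p)) + ε`. -/
theorem cdf_composition_bound
    (ΦA ΦB ΦAn ΦBn : ℝ → ℝ)
    (hΦA : Monotone ΦA) (hΦB : Monotone ΦB) (hΦAn : Monotone ΦAn) (hΦBn : Monotone ΦBn)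
    (hΦAr : ∀ x : ℝ, ΦA x ∈ Set.Icc (0:ℝ) 1) (hΦBr : ∀ x : ℝ, ΦB x ∈ Set.Icc (0:ℝ) 1)
    (hΦAnr : ∀ x : ℝ, ΦAn x ∈ Set.Icc (0:ℝ) 1) (hΦBnr : ∀ x : ℝ, ΦBn x ∈ Set.Icc (0:ℝ) 1)
    (ε : ℝ) (hε : 0 ≤ ε)
    (hbandA : ∀ x : ℝ, |ΦAn x - ΦA x| ≤ ε) (hbandB : ∀ x : ℝ, |ΦBn x - ΦB x| ≤ ε)
    (p : ℝ) (hp : p ∈ Set.Ioo (0:ℝ) 1)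
    (hfin : geninvE (fun x => ΦAn x - ε) p ≠ ⊤ ∧ geninvE (fun x => ΦAn x - ε) p ≠ ⊥) :
    evalE ΦBn (geninvE (fun x => ΦAn x + ε) p) - ε ≤ evalE ΦB (geninvE ΦA p) ∧
      evalE ΦB (geninvE ΦA p) ≤ evalE ΦBn (geninvE (fun x => ΦAn x - ε) p) + ε := by

  have hA1 : ∀ x, ΦA x ≤ ΦAn x + ε := fun x => by
    have := abs_le.mp (hbandA x); linarith [this.1]
  have hA2 : ∀ x, ΦAn x - ε ≤ ΦA x := fun x => by
    have := abs_le.mp (hbandA x); linarith [this.2]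
  have hB1 : ∀ x, ΦB x ≤ ΦBn x + ε := fun x => by
    have := abs_le.mp (hbandB x); linarith [this.1]
  have hB2 : ∀ x, ΦBn x ≤ ΦB x + ε := fun x => by
    have := abs_le.mp (hbandB x); linarith [this.2]
  have g1 : geninvE (fun x => ΦAn x + ε) p ≤ geninvE ΦA p := geninvE_anti _ _ hA1 p
  have g2 : geninvE ΦA p ≤ geninvE (fun x => ΦAn x - ε) p := geninvE_anti _ _ hA2 p
  constructor
  · calc evalE ΦBn (geninvE (fun x => ΦAn x + ε) p) - ε
        ≤ evalE ΦB (geninvE (fun x => ΦAn x + ε) p) := by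
          have := evalE_band ΦBn ΦB ε hΦBnr hΦBr hB2 (geninvE (fun x => ΦAn x + ε) p)
          linarith
      _ ≤ evalE ΦB (geninvE ΦA p) := evalE_mono ΦB hΦB hΦBr g1
  · calc evalE ΦB (geninvE ΦA p)
        ≤ evalE ΦB (geninvE (fun x => ΦAn x - ε) p) := evalE_mono ΦB hΦB hΦBr g2
      _ ≤ evalE ΦBn (geninvE (fun x => ΦAn x - ε) p) + ε :=
          evalE_band ΦB ΦBn ε hΦBr hΦBnr hB1 _
end

section
/- (Deterministic core of the PAC bound on p-RSR) Let A and B be real-valued random variables on a common probability space with CDFs Φ_A and Φ_B, where Φ_A is continuous. Let Φ_A⁽ⁿ⁾, Φ_B⁽ⁿ⁾ : ℝ → [0,1] be nondecreasing functions and ε ≥ 0 with |Φ_A⁽ⁿ⁾(x) − Φ_A(x)| ≤ ε and |Φ_B⁽ⁿ⁾(x) − Φ_B(x)| ≤ ε for all x ∈ ℝ. Then for every p ∈ (0,1) with (Φ_A⁽ⁿ⁾ − ε)^{-1}(p) finite, the p-quantile relative scenario risk R(p) = P(B > Φ_A^{-1}(p) | A ≤ Φ_A^{-1}(p)) satisfies: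 1 − min{p, v̄}/p ≤ R(p) ≤ 1 − max{p + v̲ − 1, 0}/p, where v̲ = Φ_B⁽ⁿ⁾((Φ_A⁽ⁿ⁾ + ε)^{-1}(p)) − ε and v̄ = Φ_B⁽ⁿ⁾((Φ_A⁽ⁿ⁾ − ε)^{-1}(p)) + ε. -/
open MeasureTheory

/-- The generalized inverse `H⁻¹(p) = inf {x : ℝ | H x ≥ p}` of a function
`H : ℝ → ℝ` (real-valued; for a CDF of a real random variable and `p ∈ (0,1)` the
infimum is over a nonempty set that is bounded below). -/
noncomputable def geninv (H : ℝ → ℝ) (p : ℝ) : ℝ :=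
  sInf {x : ℝ | p ≤ H x}

/-- **Deterministic core of the PAC bound on the `p`-quantile relative scenario
risk.** Let `A`, `B` be real random variables with CDFs `ΦA` (continuous) and `ΦB`.
Let `ΦAn ΦBn : ℝ → [0,1]` be nondecreasing and `ε ≥ 0` with `|ΦAn x - ΦA x| ≤ ε` and
`|ΦBn x - ΦB x| ≤ ε` for all `x`. Then for every `p ∈ (0,1)` with `(ΦAn - ε)⁻¹(p)`
finite, the `p`-quantile relative scenario risk
`R(p) = P(B > ΦA⁻¹(p) | A ≤ ΦA⁻¹(p))` satisfies
`1 - min p v̄ / p ≤ R(p) ≤ 1 - max (p + v̲ - 1) 0 / p`, where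
`v̲ = ΦBn ((ΦAn + ε)⁻¹(p)) - ε` and `v̄ = ΦBn ((ΦAn - ε)⁻¹(p)) + ε`. -/
theorem deterministic_pac_bound_p_rsr
    {Ω : Type*} [MeasurableSpace Ω] (μ : Measure Ω) [IsProbabilityMeasure μ]
    (A B : Ω → ℝ) (hA : Measurable A) (hB : Measurable B)
    (ΦA ΦB : ℝ → ℝ)
    (hΦA : ∀ x : ℝ, ΦA x = (μ {ω | A ω ≤ x}).toReal)
    (hΦB : ∀ x : ℝ, ΦB x = (μ {ω | B ω ≤ x}).toReal)
    (hContA : Continuous ΦA)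
    (ΦAn ΦBn : ℝ → ℝ) (hΦAn : Monotone ΦAn) (hΦBn : Monotone ΦBn)
    (hΦAnr : ∀ x : ℝ, ΦAn x ∈ Set.Icc (0:ℝ) 1) (hΦBnr : ∀ x : ℝ, ΦBn x ∈ Set.Icc (0:ℝ) 1)
    (ε : ℝ) (hε : 0 ≤ ε)
    (hbandA : ∀ x : ℝ, |ΦAn x - ΦA x| ≤ ε) (hbandB : ∀ x : ℝ, |ΦBn x - ΦB x| ≤ ε)
    (p : ℝ) (hp : p ∈ Set.Ioo (0:ℝ) 1)
    (hfin : geninvE (fun x => ΦAn x - ε) p ≠ ⊤ ∧ geninvE (fun x => ΦAn x - ε) p ≠ ⊥) :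
    1 - min p (evalE ΦBn (geninvE (fun x => ΦAn x - ε) p) + ε) / p ≤
        (μ {ω | geninv ΦA p < B ω ∧ A ω ≤ geninv ΦA p}).toReal /
          (μ {ω | A ω ≤ geninv ΦA p}).toReal ∧
      (μ {ω | geninv ΦA p < B ω ∧ A ω ≤ geninv ΦA p}).toReal /
          (μ {ω | A ω ≤ geninv ΦA p}).toReal ≤
        1 - max (p + (evalE ΦBn (geninvE (fun x => ΦAn x + ε) p) - ε) - 1) 0 / p := by
  obtain ⟨hp0, hp1⟩ := hp
  set θ := geninv ΦA p with hθdef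
  -- monotonicity of the true CDFs
  have hmonoA : Monotone ΦA := by
    intro x y hxy
    rw [hΦA x, hΦA y]
    exact ENNReal.toReal_mono (measure_ne_top μ _)
      (measure_mono fun ω hω => le_trans hω hxy)
  have hmonoB : Monotone ΦB := by
    intro x y hxy
    rw [hΦB x, hΦB y]
    exact ENNReal.toReal_mono (measure_ne_top μ _)
      (measure_mono fun ω hω => le_trans hω hxy)
  -- there is a point where ΦA exceeds p
  have hex : ∃ x : ℝ, p ≤ ΦA x := by
    have hmono : Monotone (fun n : ℕ => {ω | A ω ≤ (n : ℝ)}) := by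
      intro m n h ω hω
      simp only [Set.mem_setOf_eq] at hω ⊢
      exact le_trans hω (by exact_mod_cast h)
    have hU : (⋃ n : ℕ, {ω | A ω ≤ (n : ℝ)}) = Set.univ := by
      ext ω
      simp only [Set.mem_iUnion, Set.mem_univ, iff_true, Set.mem_setOf_eq]
      exact exists_nat_ge (A ω)
    have ht := tendsto_measure_iUnion_atTop (μ := μ) hmono
    rw [hU, measure_univ] at ht
    have ht2 : Filter.Tendsto (fun n : ℕ => (μ {ω | A ω ≤ (n : ℝ)}).toReal)
        Filter.atTop (nhds 1) := by
      have := (ENNReal.tendsto_toReal (by norm_num : (1 : ENNReal) ≠ ⊤)).comp ht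
      simpa [Function.comp_def] using this
    obtain ⟨n, hn⟩ := (ht2.eventually (lt_mem_nhds hp1)).exists
    exact ⟨n, by rw [hΦA]; exact hn.le⟩
  -- there is a point where ΦA is below p
  have hex2 : ∃ x : ℝ, ΦA x < p := by
    have hanti : Antitone (fun n : ℕ => {ω | A ω ≤ -(n : ℝ)}) := by
      intro m n h ω hω
      simp only [Set.mem_setOf_eq] at hω ⊢
      refine le_trans hω (neg_le_neg ?_)
      exact_mod_cast h
    have hI : (⋂ n : ℕ, {ω | A ω ≤ -(n : ℝ)}) = ∅ := by
      ext ω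
      simp only [Set.mem_iInter, Set.mem_empty_iff_false, iff_false, not_forall,
        Set.mem_setOf_eq, not_le]
      obtain ⟨n, hn⟩ := exists_nat_gt (-(A ω))
      exact ⟨n, by linarith⟩
    have ht := tendsto_measure_iInter_atTop (μ := μ)
      (s := fun n : ℕ => {ω | A ω ≤ -(n : ℝ)})
      (fun n => ((hA measurableSet_Iic) : MeasurableSet {ω | A ω ≤ -(n : ℝ)}).nullMeasurableSet)
      hanti ⟨0, measure_ne_top μ _⟩
    rw [hI, measure_empty] at ht
    have ht2 : Filter.Tendsto (fun n : ℕ => (μ {ω | A ω ≤ -(n : ℝ)}).toReal)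
        Filter.atTop (nhds 0) := by
      have := (ENNReal.tendsto_toReal (by norm_num : (0 : ENNReal) ≠ ⊤)).comp ht
      simpa [Function.comp_def] using this
    obtain ⟨n, hn⟩ := (ht2.eventually (gt_mem_nhds hp0)).exists
    exact ⟨-(n : ℝ), by rw [hΦA]; exact hn⟩
  obtain ⟨x₀, hx₀⟩ := hex2
  have Sne : {x : ℝ | p ≤ ΦA x}.Nonempty := hex
  have Sbdd : BddBelow {x : ℝ | p ≤ ΦA x} := by
    refine ⟨x₀, fun y hy => ?_⟩
    by_contra h
    push_neg at h
    exact absurd (le_trans hy (hmonoA h.le)) (not_le.2 hx₀)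
  have Sclosed : IsClosed {x : ℝ | p ≤ ΦA x} := isClosed_le continuous_const hContA
  have hθmem : θ ∈ {x : ℝ | p ≤ ΦA x} := Sclosed.csInf_mem Sne Sbdd
  -- ΦA θ = p
  have hθp : ΦA θ = p := by
    refine le_antisymm ?_ hθmem
    by_contra h
    push_neg at h
    have hUopen : IsOpen {x : ℝ | p < ΦA x} := isOpen_lt continuous_const hContA
    have hmem : {x : ℝ | p < ΦA x} ∈ nhdsWithin θ (Set.Iio θ) :=
      mem_nhdsWithin_of_mem_nhds (hUopen.mem_nhds h)
    have hev : ∀ᶠ x in nhdsWithin θ (Set.Iio θ), p < ΦA x ∧ x < θ := by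
      filter_upwards [hmem, self_mem_nhdsWithin] with x h1 h2
      exact ⟨h1, h2⟩
    obtain ⟨x, hxU, hxlt⟩ := hev.exists
    have hx2 : θ ≤ x := csInf_le Sbdd (le_of_lt hxU)
    exact absurd hxlt (not_lt.2 hx2)
  have hTμ : (μ {ω | A ω ≤ θ}).toReal = p := by rw [← hΦA]; exact hθp
  set SA := {ω | A ω ≤ θ} with hSA
  set SB := {ω | B ω ≤ θ} with hSB
  have mSA : MeasurableSet SA := hA measurableSet_Iic
  have mSB : MeasurableSet SB := hB measurableSet_Iic
  set q := ΦB θ with hq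
  have hqμ : (μ SB).toReal = q := (hΦB θ).symm
  set J := (μ (SB ∩ SA)).toReal with hJ
  have hJ_le_p : J ≤ p := by
    rw [← hTμ]
    exact ENNReal.toReal_mono (measure_ne_top μ _) (measure_mono Set.inter_subset_right)
  have hJ_le_q : J ≤ q := by
    rw [← hqμ]
    exact ENNReal.toReal_mono (measure_ne_top μ _) (measure_mono Set.inter_subset_left)
  have hJ_nonneg : 0 ≤ J := ENNReal.toReal_nonneg
  -- Fréchet lower bound
  have hFrechet : p + q - 1 ≤ J := by
    have h1 : μ (SB ∪ SA) + μ (SB ∩ SA) = μ SB + μ SA := measure_union_add_inter SB mSA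
    have h2 : (μ (SB ∪ SA)).toReal + J = q + p := by
      rw [hJ, ← ENNReal.toReal_add (measure_ne_top μ _) (measure_ne_top μ _), h1,
        ENNReal.toReal_add (measure_ne_top μ _) (measure_ne_top μ _), hqμ, hTμ]
    have h3 : (μ (SB ∪ SA)).toReal ≤ 1 := by
      rw [← ENNReal.toReal_one]
      exact ENNReal.toReal_mono (by norm_num) prob_le_one
    linarith
  -- the numerator
  have hset : {ω | θ < B ω ∧ A ω ≤ θ} = SA \ (SB ∩ SA) := by
    ext ω
    simp only [Set.mem_setOf_eq, Set.mem_diff, Set.mem_inter_iff, hSA, hSB]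
    constructor
    · rintro ⟨h1, h2⟩; exact ⟨h2, fun hc => absurd hc.1 (not_le.2 h1)⟩
    · rintro ⟨h1, h2⟩; exact ⟨lt_of_not_ge fun hb => h2 ⟨hb, h1⟩, h1⟩
  have hnum : (μ {ω | θ < B ω ∧ A ω ≤ θ}).toReal = p - J := by
    rw [hset, measure_diff Set.inter_subset_right (mSB.inter mSA).nullMeasurableSet
      (measure_ne_top μ _), ENNReal.toReal_sub_of_le (measure_mono Set.inter_subset_right)
      (measure_ne_top μ _), hTμ, hJ]
  -- range facts
  have hq0 : 0 ≤ q := by rw [hq, hΦB]; exact ENNReal.toReal_nonneg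
  -- upper envelope v̄ bounds q from above
  have hvbar : q ≤ evalE ΦBn (geninvE (fun x => ΦAn x - ε) p) + ε := by
    set gE := geninvE (fun x => ΦAn x - ε) p with hgE
    have hθle : (θ : EReal) ≤ gE := by
      refine le_sInf ?_
      rintro b ⟨x, hx, rfl⟩
      have hxS : x ∈ {x : ℝ | p ≤ ΦA x} := by
        have hb := abs_le.1 (hbandA x)
        have : p ≤ ΦAn x - ε := hx
        simp only [Set.mem_setOf_eq]
        linarith [hb.1]
      have hx2 : θ ≤ x := csInf_le Sbdd hxS
      show (θ : EReal) ≤ (x : EReal)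
      exact_mod_cast hx2
    have hθle' : θ ≤ gE.toReal := by
      have := EReal.toReal_le_toReal hθle (EReal.coe_ne_bot θ) hfin.1
      simpa using this
    have heval : evalE ΦBn gE = ΦBn gE.toReal := by
      rw [evalE, if_neg hfin.2, if_neg hfin.1]
    have h1 : q ≤ ΦB gE.toReal := hmonoB hθle'
    have h2 : ΦB gE.toReal ≤ ΦBn gE.toReal + ε := by
      have := abs_le.1 (hbandB gE.toReal)
      linarith [this.1]
    rw [heval]
    linarith
  -- lower envelope v̲ bounds q from below
  have hvlow : evalE ΦBn (geninvE (fun x => ΦAn x + ε) p) - ε ≤ q := by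
    set gE := geninvE (fun x => ΦAn x + ε) p with hgE
    have hle2 : gE ≤ (θ : EReal) := by
      refine sInf_le ⟨θ, ?_, rfl⟩
      have hb := abs_le.1 (hbandA θ)
      simp only [Set.mem_setOf_eq]
      linarith [hθp, hb.2]
    have hne_top : gE ≠ ⊤ := ne_top_of_le_ne_top (EReal.coe_ne_top θ) hle2
    have hkey : evalE ΦBn gE ≤ ΦBn θ := by
      by_cases hbot : gE = ⊥
      · rw [evalE, if_pos hbot]
        exact csInf_le ⟨0, by rintro y ⟨x, rfl⟩; exact (hΦBnr x).1⟩ (Set.mem_range_self θ)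
      · rw [evalE, if_neg hbot, if_neg hne_top]
        refine hΦBn ?_
        have := EReal.toReal_le_toReal hle2 hbot (EReal.coe_ne_top θ)
        simpa using this
    have hb := abs_le.1 (hbandB θ)
    linarith [hb.1]
  -- final arithmetic
  rw [hnum, hTμ]
  set vbar := evalE ΦBn (geninvE (fun x => ΦAn x - ε) p) + ε with hvb
  set vlow := evalE ΦBn (geninvE (fun x => ΦAn x + ε) p) - ε with hvl
  constructor
  · have hJ' : J ≤ min p vbar := le_min hJ_le_p (hJ_le_q.trans hvbar)
    calc 1 - min p vbar / p = (p - min p vbar) / p := by rw [sub_div, div_self hp0.ne']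
      _ ≤ (p - J) / p := by gcongr
  · have hJ'' : max (p + vlow - 1) 0 ≤ J := max_le (by linarith) hJ_nonneg
    calc (p - J) / p ≤ (p - max (p + vlow - 1) 0) / p := by gcongr
      _ = 1 - max (p + vlow - 1) 0 / p := by rw [sub_div, div_self hp0.ne']
end

section
/- (PAC bound on p-RSR) Let A and B be real-valued random variables on a common probability space with CDFs Φ_A and Φ_B, where Φ_A is continuous. Let {A_i}_{i=1}^n be i.i.d. samples with CDF Φ_A and {B_i}_{i=1}^n be i.i.d. samples with CDF Φ_B, with empirical CDFs Φ_A⁽ⁿ⁾ and Φ_B⁽ⁿ⁾. Let p ∈ (0,1), α ∈ (0,1), and ε(α,n) = √(ln(2/α)/(2n)). Then with probability at least 1 − 2α, the p-quantile relative scenario risk R(p) = P(B > Φ_A^{-1}(p) | A ≤ Φ_A^{-1}(p)) satisfies: 1 − min{p, v̄(p,α,n)}/p ≤ R(p) ≤ 1 − max{p + v̲(p,α,n) − 1, 0}/p, where v̲(p,α,n) = Φ_B⁽ⁿ⁾((Φ_A⁽ⁿ⁾ + ε(α,n))^{-1}(p)) − ε(α,n) and v̄(p,α,n) = Φ_B⁽ⁿ⁾((Φ_A⁽ⁿ⁾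 − ε(α,n))^{-1}(p)) + ε(α,n). -/
open MeasureTheory

/-- The empirical CDF of the samples `X 0, …, X (n-1)` evaluated at the outcome `ω` and
the point `x`: `Φ⁽ⁿ⁾(x) = (1/n) ∑_{i=1}^n 1[X i ≤ x]`. -/
noncomputable def empCDF {Ω : Type*} (n : ℕ) (X : Fin n → Ω → ℝ) (ω : Ω) (x : ℝ) : ℝ :=
  (n : ℝ)⁻¹ * ∑ i : Fin n, if X i ω ≤ x then (1 : ℝ) else 0

/-!
Write `q = Φ_A⁻¹(p)`. Continuity of `Φ_A` gives `P(A ≤ q) = P(A < q) = p`, so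
`R(p) = 1 - P(A ≤ q, B ≤ q) / p`, and the Fréchet bounds put `P(A ≤ q, B ≤ q)` between
`max (p + Φ_B(q) - 1) 0` and `min p Φ_B(q)`. It remains to show `v̲ ≤ Φ_B(q) ≤ v̄`,
which only needs the empirical frequencies at the single point `q` to be `ε`-accurate:
if `Φ_A⁽ⁿ⁾(q) > p - ε` then `(Φ_A⁽ⁿ⁾ + ε)⁻¹(p) ≤ q`; if the fraction of samples with
`A_i < q` is `< p + ε` then `(Φ_A⁽ⁿ⁾ - ε)⁻¹(p) ≥ q`; and `Φ_B⁽ⁿ⁾` is monotone with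
`|Φ_B⁽ⁿ⁾(q) - Φ_B(q)| < ε`. By Hoeffding's inequality each of these four one-sided events
fails with probability at most `exp (-2nε²) = α/2`.
-/

open ProbabilityTheory Filter Topology Set Real

section GeneralizedInverse

variable {H : ℝ → ℝ} {p : ℝ}

lemma apply_geninv_eq {a b : ℝ} (hH : Continuous H) (hbot : Tendsto H atBot (𝓝 a))
    (htop : Tendsto H atTop (𝓝 b)) (hp : p ∈ Ioo a b) : H (geninv H p) = p := by
  have hne : {x | p ≤ H x}.Nonempty := (htop.eventually (eventually_ge_nhds hp.2)).exists
  obtain ⟨c, hc⟩ := (hbot.eventually (eventually_lt_nhds hp.1)).exists_forall_of_atBot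
  have hbdd : BddBelow {x | p ≤ H x} :=
    ⟨c, fun x hx => le_of_not_ge fun hxc => (hc x hxc).not_ge hx⟩
  refine le_antisymm ?_ ((isClosed_le continuous_const hH).csInf_mem hne hbdd)
  have hlt : ∀ x < geninv H p, H x ≤ p := fun x hx =>
    (not_le.mp (notMem_of_lt_csInf (s := {x | p ≤ H x}) hx hbdd)).le
  exact le_of_tendsto (hH.continuousAt.tendsto.mono_left nhdsWithin_le_nhds)
    (eventually_nhdsWithin_of_forall (s := Iio (geninv H p)) hlt)

lemma geninvE_le_of_le {x : ℝ} (h : p ≤ H x) : geninvE H p ≤ x :=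
  sInf_le ⟨x, h, rfl⟩

lemma le_geninvE_of_forall_lt {x : ℝ} (h : ∀ y < x, H y < p) : (x : EReal) ≤ geninvE H p :=
  le_sInf <| by
    rintro _ ⟨y, hy, rfl⟩
    exact EReal.coe_le_coe_iff.mpr (not_lt.mp fun hyx => (h y hyx).not_ge hy)

lemma evalE_le_of_le_coe (hH : Monotone H) (hb : BddBelow (range H)) {e : EReal} {x : ℝ}
    (h : e ≤ x) : evalE H e ≤ H x := by
  unfold evalE
  split_ifs with hbot htop
  · exact csInf_le hb ⟨x, rfl⟩
  · exact absurd (htop ▸ h) (not_le.mpr (EReal.coe_lt_top x))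
  · exact hH (by simpa using EReal.toReal_le_toReal h hbot (EReal.coe_ne_top x))

lemma le_evalE_of_coe_le (hH : Monotone H) (hb : BddAbove (range H)) {e : EReal} {x : ℝ}
    (h : (x : EReal) ≤ e) : H x ≤ evalE H e := by
  unfold evalE
  split_ifs with hbot htop
  · exact absurd (hbot ▸ h) (not_le.mpr (EReal.bot_lt_coe x))
  · exact le_csSup hb ⟨x, rfl⟩
  · exact hH (by simpa using EReal.toReal_le_toReal h (EReal.coe_ne_bot x) htop)

end GeneralizedInverse

section EmpiricalFrequency

variable {Ω : Type*} {n : ℕ} {X : Fin n → Ω → ℝ} {ω : Ω}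

noncomputable def empFreq (n : ℕ) (X : Fin n → Ω → ℝ) (s : Set ℝ) (ω : Ω) : ℝ :=
  (n : ℝ)⁻¹ * ∑ i, s.indicator 1 (X i ω)

lemma empCDF_eq_empFreq (x : ℝ) : empCDF n X ω x = empFreq n X (Iic x) ω := by
  simp [empCDF, empFreq, indicator_apply]

lemma empFreq_mono {s t : Set ℝ} (h : s ⊆ t) : empFreq n X s ω ≤ empFreq n X t ω :=
  mul_le_mul_of_nonneg_left
    (Finset.sum_le_sum fun _ _ => indicator_le_indicator_of_subset h (fun _ => zero_le_one) _)
    (by positivity)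

lemma empFreq_add_empFreq_compl (hn : 0 < n) (s : Set ℝ) :
    empFreq n X s ω + empFreq n X sᶜ ω = 1 := by
  simp only [empFreq, ← mul_add, ← Finset.sum_add_distrib, indicator_self_add_compl_apply,
    Pi.one_apply, Finset.sum_const, Finset.card_univ, Fintype.card_fin, nsmul_eq_mul, mul_one]
  exact inv_mul_cancel₀ (by positivity)

lemma empFreq_nonneg (s : Set ℝ) : 0 ≤ empFreq n X s ω :=
  mul_nonneg (by positivity)
    (Finset.sum_nonneg fun _ _ => indicator_nonneg (fun _ _ => zero_le_one) _)

lemma empFreq_le_one (s : Set ℝ) : empFreq n X s ω ≤ 1 := by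
  rcases n.eq_zero_or_pos with rfl | hn
  · simp [empFreq]
  · linarith [empFreq_add_empFreq_compl (X := X) (ω := ω) hn s,
      empFreq_nonneg (X := X) (ω := ω) sᶜ]

lemma monotone_empCDF : Monotone (empCDF n X ω) := fun x y hxy => by
  simpa only [empCDF_eq_empFreq] using empFreq_mono (Iic_subset_Iic.mpr hxy)

lemma bddBelow_range_empCDF : BddBelow (range (empCDF n X ω)) :=
  ⟨0, by rintro _ ⟨x, rfl⟩; exact empCDF_eq_empFreq x ▸ empFreq_nonneg _⟩

lemma bddAbove_range_empCDF : BddAbove (range (empCDF n X ω)) :=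
  ⟨1, by rintro _ ⟨x, rfl⟩; exact empCDF_eq_empFreq x ▸ empFreq_le_one _⟩

end EmpiricalFrequency

section Concentration

variable {Ω : Type*} [MeasurableSpace Ω] {μ : Measure Ω} [IsProbabilityMeasure μ]

lemma measureReal_sum_ge_le_of_mem_Icc {ι : Type*} [Fintype ι] {Y : ι → Ω → ℝ}
    (hindep : iIndepFun Y μ) (hmeas : ∀ i, Measurable (Y i))
    (hbd : ∀ i ω, Y i ω ∈ Icc (0 : ℝ) 1) {ε : ℝ} (hε : 0 ≤ ε) :
    μ.real {ω | ∑ i, μ[Y i] + Fintype.card ι * ε ≤ ∑ i, Y i ω} ≤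
      exp (-2 * Fintype.card ι * ε ^ 2) := by
  have hsubG : ∀ i ∈ (Finset.univ : Finset ι),
      HasSubgaussianMGF (fun ω => Y i ω - μ[Y i]) ((‖(1 : ℝ) - 0‖₊ / 2) ^ 2) μ :=
    fun i _ => hasSubgaussianMGF_of_mem_Icc (hmeas i).aemeasurable (ae_of_all _ (hbd i))
  have h := HasSubgaussianMGF.measure_sum_ge_le_of_iIndepFun
    (hindep.comp (fun i x => x - μ[Y i]) fun i => by fun_prop) hsubG
    (ε := Fintype.card ι * ε) (by positivity)
  convert h using 2
  · ext ω
    simp only [mem_ofPred_eq, Function.comp_apply, Finset.sum_sub_distrib]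
    constructor <;> intro h <;> linarith
  · rcases eq_or_ne (Fintype.card ι : ℝ) 0 with hc | hc
    · simp [hc]
    · norm_num
      field_simp
      ring

variable {n : ℕ} {X : Fin n → Ω → ℝ} {s : Set ℝ} {m ε : ℝ}

lemma measureReal_le_empFreq_le (hn : 0 < n) (hindep : iIndepFun X μ)
    (hmeas : ∀ i, Measurable (X i)) (hs : MeasurableSet s) (hm : ∀ i, μ.real (X i ⁻¹' s) = m)
    (hε : 0 ≤ ε) :
    μ.real {ω | m + ε ≤ empFreq n X s ω} ≤ exp (-2 * n * ε ^ 2) := by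
  have hmean : ∀ i, μ[fun ω => s.indicator 1 (X i ω)] = m := fun i => by
    simp_rw [← indicator_comp_right (X i)]
    rw [← hm i]
    exact integral_indicator_one ((hmeas i) hs)
  have h := measureReal_sum_ge_le_of_mem_Icc (Y := fun i ω => s.indicator 1 (X i ω))
    (hindep.comp (fun _ => s.indicator 1) fun _ => measurable_one.indicator hs)
    (fun i => measurable_one.indicator hs |>.comp (hmeas i))
    (fun i ω => ⟨indicator_nonneg (fun _ _ => zero_le_one) _,
      indicator_le_self' (fun _ _ => zero_le_one) _⟩) hε
  simp only [hmean, Finset.sum_const, Finset.card_univ, Fintype.card_fin, nsmul_eq_mul] at h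
  refine (measureReal_mono fun ω hω => ?_).trans h
  have hn' : (0 : ℝ) < n := by exact_mod_cast hn
  simp only [mem_ofPred_eq, empFreq] at hω ⊢
  rw [inv_mul_eq_div, le_div_iff₀ hn'] at hω
  linarith

lemma measureReal_empFreq_le_le (hn : 0 < n) (hindep : iIndepFun X μ)
    (hmeas : ∀ i, Measurable (X i)) (hs : MeasurableSet s) (hm : ∀ i, μ.real (X i ⁻¹' s) = m)
    (hε : 0 ≤ ε) :
    μ.real {ω | empFreq n X s ω ≤ m - ε} ≤ exp (-2 * n * ε ^ 2) := by
  have hmc : ∀ i, μ.real (X i ⁻¹' sᶜ) = 1 - m := fun i => by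
    rw [preimage_compl, probReal_compl_eq_one_sub ((hmeas i) hs), hm]
  refine (measureReal_mono fun ω hω => ?_).trans
    (measureReal_le_empFreq_le hn hindep hmeas hs.compl hmc hε)
  have := empFreq_add_empFreq_compl (X := X) (ω := ω) hn s
  simp only [mem_ofPred_eq] at hω ⊢
  linarith

lemma measureReal_compl_empFreq_band_le (hn : 0 < n) (hindep : iIndepFun X μ)
    (hmeas : ∀ i, Measurable (X i)) {t : Set ℝ} {m' : ℝ} (hs : MeasurableSet s)
    (ht : MeasurableSet t) (hm : ∀ i, μ.real (X i ⁻¹' s) = m)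
    (hm' : ∀ i, μ.real (X i ⁻¹' t) = m') (hε : 0 ≤ ε) :
    μ.real {ω | m - ε < empFreq n X s ω ∧ empFreq n X t ω < m' + ε}ᶜ ≤
      2 * exp (-2 * n * ε ^ 2) := by
  have hsub : {ω | m - ε < empFreq n X s ω ∧ empFreq n X t ω < m' + ε}ᶜ ⊆
      {ω | empFreq n X s ω ≤ m - ε} ∪ {ω | m' + ε ≤ empFreq n X t ω} := fun ω hω => by
    simp only [mem_compl_iff, mem_ofPred_eq, mem_union, not_and_or, not_lt] at hω ⊢
    exact hω
  refine (measureReal_mono hsub).trans ((measureReal_union_le _ _).trans ?_)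
  linarith [measureReal_empFreq_le_le hn hindep hmeas hs hm hε,
    measureReal_le_empFreq_le hn hindep hmeas ht hm' hε]

end Concentration

section Distribution

variable {Ω : Type*} [MeasurableSpace Ω] {μ : Measure Ω} [IsProbabilityMeasure μ]
  {X : Ω → ℝ} {Φ : ℝ → ℝ}

lemma cdf_map_eq (hX : Measurable X) (hΦ : ∀ x, μ.real {ω | X ω ≤ x} = Φ x) :
    cdf (μ.map X) = Φ := by
  have := Measure.isProbabilityMeasure_map (μ := μ) hX.aemeasurable
  ext x
  rw [cdf_eq_real, map_measureReal_apply hX measurableSet_Iic, ← hΦ]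
  rfl

lemma apply_geninv_eq_of_continuous (hX : Measurable X) (hΦ : ∀ x, μ.real {ω | X ω ≤ x} = Φ x)
    (hc : Continuous Φ) {p : ℝ} (hp : p ∈ Ioo 0 1) : Φ (geninv Φ p) = p :=
  apply_geninv_eq hc (cdf_map_eq hX hΦ ▸ tendsto_cdf_atBot _)
    (cdf_map_eq hX hΦ ▸ tendsto_cdf_atTop _) hp

lemma measureReal_lt_eq_of_continuous (hX : Measurable X)
    (hΦ : ∀ x, μ.real {ω | X ω ≤ x} = Φ x) (hc : Continuous Φ) (x : ℝ) :
    μ.real {ω | X ω < x} = Φ x := by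
  have := Measure.isProbabilityMeasure_map (μ := μ) hX.aemeasurable
  have hcont : ContinuousAt (cdf (μ.map X)) x := (cdf_map_eq hX hΦ).symm ▸ hc.continuousAt
  have hatom : μ.map X {x} = 0 := by
    rw [← measure_cdf (μ.map X), StieltjesFunction.measure_singleton,
      hcont.continuousWithinAt.leftLim_eq, sub_self, ENNReal.ofReal_zero]
  rw [← hΦ]
  change μ.real (X ⁻¹' Iio x) = μ.real (X ⁻¹' Iic x)
  rw [← map_measureReal_apply hX measurableSet_Iio, measureReal_congr (Iio_ae_eq_Iic' hatom),
    map_measureReal_apply hX measurableSet_Iic]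

lemma frechet_bounds_measureReal_sdiff_div {s t : Set Ω} (ht : MeasurableSet t)
    (hs : 0 < μ.real s) {lo hi : ℝ} (hlo : lo ≤ μ.real t) (hhi : μ.real t ≤ hi) :
    1 - min (μ.real s) hi / μ.real s ≤ μ.real (s \ t) / μ.real s ∧
      μ.real (s \ t) / μ.real s ≤ 1 - max (μ.real s + lo - 1) 0 / μ.real s := by
  have hsplit := measureReal_sdiff_add_inter (μ := μ) (s := s) ht
  have hunion := measureReal_union_add_inter (μ := μ) (s := s) ht
  have hle_one : μ.real (s ∪ t) ≤ 1 := measureReal_le_one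
  have hle_s : μ.real (s ∩ t) ≤ μ.real s := measureReal_mono inter_subset_left
  have hle_t : μ.real (s ∩ t) ≤ μ.real t := measureReal_mono inter_subset_right
  have hnonneg : 0 ≤ μ.real (s ∩ t) := measureReal_nonneg
  rw [one_sub_div hs.ne', one_sub_div hs.ne']
  constructor <;> refine div_le_div_of_nonneg_right ?_ hs.le
  · linarith [le_min hle_s (hle_t.trans hhi)]
  · linarith [max_le (by linarith : μ.real s + lo - 1 ≤ μ.real (s ∩ t)) hnonneg]

lemma ofReal_one_sub_le_of_measureReal_compl_le {s : Set Ω} {δ : ℝ} (h : μ.real sᶜ ≤ δ) :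
    ENNReal.ofReal (1 - δ) ≤ μ s := by
  have hcover : 1 ≤ μ.real s + μ.real sᶜ := by
    simpa [union_compl_self] using measureReal_union_le (μ := μ) s sᶜ
  rw [ENNReal.ofReal_le_iff_le_toReal (measure_ne_top μ s)]
  exact (by linarith : 1 - δ ≤ μ.real s)

end Distribution

lemma evalE_geninvE_empCDF_bracket {Ω : Type*} {n : ℕ} {As Bs : Fin n → Ω → ℝ} {ω : Ω}
    {q p ε b : ℝ} (hA_le : p - ε < empFreq n As (Iic q) ω)
    (hA_lt : empFreq n As (Iio q) ω < p + ε) (hB_lo : b - ε < empFreq n Bs (Iic q) ω)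
    (hB_hi : empFreq n Bs (Iic q) ω < b + ε) :
    evalE (empCDF n Bs ω) (geninvE (fun x => empCDF n As ω x + ε) p) - ε ≤ b ∧
      b ≤ evalE (empCDF n Bs ω) (geninvE (fun x => empCDF n As ω x - ε) p) + ε := by
  rw [← empCDF_eq_empFreq] at hA_le hB_lo hB_hi
  constructor
  · have : evalE (empCDF n Bs ω) (geninvE (fun x => empCDF n As ω x + ε) p) ≤ empCDF n Bs ω q :=
      evalE_le_of_le_coe monotone_empCDF bddBelow_range_empCDF
        (geninvE_le_of_le (H := fun x => empCDF n As ω x + ε) (by linarith))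
    linarith
  · have hbelow : ∀ y < q, empCDF n As ω y - ε < p := fun y hy => by
      have := empFreq_mono (X := As) (ω := ω) (Iic_subset_Iio.mpr hy)
      rw [← empCDF_eq_empFreq] at this
      linarith
    have : empCDF n Bs ω q ≤ evalE (empCDF n Bs ω) (geninvE (fun x => empCDF n As ω x - ε) p) :=
      le_evalE_of_coe_le monotone_empCDF bddAbove_range_empCDF (le_geninvE_of_forall_lt hbelow)
    linarith

lemma exp_neg_two_mul_mul_sqrt_log_div_sq {n δ : ℝ} (hn : 0 < n) (hδ : 1 ≤ δ) :
    exp (-2 * n * sqrt (log δ / (2 * n)) ^ 2) = δ⁻¹ := by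
  rw [sq_sqrt (div_nonneg (log_nonneg hδ) (by positivity)),
    show -2 * n * (log δ / (2 * n)) = -log δ by field_simp, exp_neg,
    exp_log (by linarith)]

/-- **PAC bound on the `p`-quantile relative scenario risk (Theorem 2 of the paper,
with union-bound confidence `1 - 2α`).** Let `A`, `B` be real random variables with
CDFs `ΦA` (continuous) and `ΦB`, let `{A_i}` be `n` i.i.d. samples with CDF `ΦA` and
`{B_i}` be `n` i.i.d. samples with CDF `ΦB`, with empirical CDFs `ΦA⁽ⁿ⁾`, `ΦB⁽ⁿ⁾`.
Let `p, α ∈ (0,1)` and `ε = √(ln(2/α)/(2n))`. Then, with probability at least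
`1 - 2α`, the `p`-quantile relative scenario risk
`R(p) = P(B > ΦA⁻¹(p) | A ≤ ΦA⁻¹(p))` satisfies
`1 - min p v̄ / p ≤ R(p) ≤ 1 - max (p + v̲ - 1) 0 / p`, where
`v̲ = ΦB⁽ⁿ⁾((ΦA⁽ⁿ⁾ + ε)⁻¹(p)) - ε` and `v̄ = ΦB⁽ⁿ⁾((ΦA⁽ⁿ⁾ - ε)⁻¹(p)) + ε`. -/
theorem pac_bound_p_rsr
    {Ω : Type*} [MeasurableSpace Ω] (μ : Measure Ω) [IsProbabilityMeasure μ]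
    (A B : Ω → ℝ) (hA : Measurable A) (hB : Measurable B)
    (ΦA ΦB : ℝ → ℝ)
    (hΦA : ∀ x : ℝ, ΦA x = (μ {ω | A ω ≤ x}).toReal)
    (hΦB : ∀ x : ℝ, ΦB x = (μ {ω | B ω ≤ x}).toReal)
    (hContA : Continuous ΦA)
    (n : ℕ) (hn : 0 < n) (As Bs : Fin n → Ω → ℝ)
    (hAsMeas : ∀ i, Measurable (As i)) (hBsMeas : ∀ i, Measurable (Bs i))
    (hAsIndep : ProbabilityTheory.iIndepFun As μ)
    (hBsIndep : ProbabilityTheory.iIndepFun Bs μ)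
    (hAsDist : ∀ (i : Fin n) (x : ℝ), (μ {ω | As i ω ≤ x}).toReal = ΦA x)
    (hBsDist : ∀ (i : Fin n) (x : ℝ), (μ {ω | Bs i ω ≤ x}).toReal = ΦB x)
    (p α ε : ℝ) (hp : p ∈ Set.Ioo (0:ℝ) 1) (hα : α ∈ Set.Ioo (0:ℝ) 1)
    (hε : ε = Real.sqrt (Real.log (2 / α) / (2 * n))) :
    ENNReal.ofReal (1 - 2 * α) ≤
      μ {ω |
        1 - min p (evalE (empCDF n Bs ω)
              (geninvE (fun x => empCDF n As ω x - ε) p) + ε) / p ≤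
            (μ {ω' | geninv ΦA p < B ω' ∧ A ω' ≤ geninv ΦA p}).toReal /
              (μ {ω' | A ω' ≤ geninv ΦA p}).toReal ∧
          (μ {ω' | geninv ΦA p < B ω' ∧ A ω' ≤ geninv ΦA p}).toReal /
              (μ {ω' | A ω' ≤ geninv ΦA p}).toReal ≤
            1 - max (p + (evalE (empCDF n Bs ω)
              (geninvE (fun x => empCDF n As ω x + ε) p) - ε) - 1) 0 / p} := by
  set q := geninv ΦA p
  have hq : ΦA q = p := apply_geninv_eq_of_continuous hA (fun x => (hΦA x).symm) hContA hp
  have hAs_le : ∀ i, μ.real (As i ⁻¹' Iic q) = p := fun i => (hAsDist i q).trans hq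
  have hAs_lt : ∀ i, μ.real (As i ⁻¹' Iio q) = p := fun i =>
    (measureReal_lt_eq_of_continuous (hAsMeas i) (hAsDist i) hContA q).trans hq
  have hBs_le : ∀ i, μ.real (Bs i ⁻¹' Iic q) = ΦB q := fun i => hBsDist i q
  have hε0 : 0 ≤ ε := hε ▸ sqrt_nonneg _
  have htail : exp (-2 * n * ε ^ 2) = α / 2 := by
    rw [hε, exp_neg_two_mul_mul_sqrt_log_div_sq (by exact_mod_cast hn)
      ((one_le_div hα.1).mpr (by linarith [hα.2])), inv_div]
  set goodA := {ω | p - ε < empFreq n As (Iic q) ω ∧ empFreq n As (Iio q) ω < p + ε}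
  set goodB := {ω | ΦB q - ε < empFreq n Bs (Iic q) ω ∧ empFreq n Bs (Iic q) ω < ΦB q + ε}
  have hbad : μ.real (goodA ∩ goodB)ᶜ ≤ 2 * α := by
    rw [compl_inter]
    refine (measureReal_union_le _ _).trans ?_
    linarith [measureReal_compl_empFreq_band_le hn hAsIndep hAsMeas measurableSet_Iic
        measurableSet_Iio hAs_le hAs_lt hε0,
      measureReal_compl_empFreq_band_le hn hBsIndep hBsMeas measurableSet_Iic
        measurableSet_Iic hBs_le hBs_le hε0]
  refine (ofReal_one_sub_le_of_measureReal_compl_le hbad).trans (measure_mono ?_)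
  rintro ω ⟨⟨hA_le, hA_lt⟩, hB_lo, hB_hi⟩
  obtain ⟨hlo, hhi⟩ := evalE_geninvE_empCDF_bracket hA_le hA_lt hB_lo hB_hi
  have hPA : μ.real {ω | A ω ≤ q} = p := (hΦA q).symm.trans hq
  have hset : {ω | A ω ≤ q} \ B ⁻¹' Iic q = {ω' | q < B ω' ∧ A ω' ≤ q} := by
    ext ω'; simp [and_comm]
  have := frechet_bounds_measureReal_sdiff_div (s := {ω | A ω ≤ q}) (hB measurableSet_Iic)
    (hPA ▸ hp.1) (hΦB q ▸ hlo) (hΦB q ▸ hhi)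
  rw [hPA, hset] at this
  simpa only [mem_ofPred_eq, ← measureReal_def, hPA] using this
end

section
/- (Attainment of the perfectly positively dependent case) Let A be a real-valued random variable with CDF Φ_A, let f : ℝ → ℝ be strictly increasing, and let B be a real-valued random variable with B = f(A) almost surely and CDF Φ_B. Then for all a, b ∈ ℝ: P(A ≤ a, B ≤ b) = min{Φ_A(a), Φ_B(b)}; i.e., the joint CDF attains the Fréchet–Hoeffding upper bound. -/
open MeasureTheory

/-- **Attainment of the Fréchet–Hoeffding upper bound under perfect positive
dependence.** Let `A` be a real random variable with CDF `ΦA`, let `f : ℝ → ℝ` be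
strictly increasing, and let `B` be a real random variable with `B = f ∘ A` almost
surely and CDF `ΦB`. Then for all `a b : ℝ`:
`P(A ≤ a, B ≤ b) = min (ΦA a) (ΦB b)`. -/
theorem frechet_hoeffding_upper_attained
    {Ω : Type*} [MeasurableSpace Ω] (μ : Measure Ω) [IsProbabilityMeasure μ]
    (A B : Ω → ℝ) (hA : Measurable A) (hB : Measurable B)
    (f : ℝ → ℝ) (hf : StrictMono f)
    (hAB : ∀ᵐ ω ∂μ, B ω = f (A ω))
    (ΦA ΦB : ℝ → ℝ)
    (hΦA : ∀ x : ℝ, ΦA x = (μ {ω | A ω ≤ x}).toReal)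
    (hΦB : ∀ x : ℝ, ΦB x = (μ {ω | B ω ≤ x}).toReal)
    (a b : ℝ) :
    (μ {ω | A ω ≤ a ∧ B ω ≤ b}).toReal = min (ΦA a) (ΦB b) := by
  have h1 : μ {ω | A ω ≤ a ∧ B ω ≤ b} = μ {ω | A ω ≤ a ∧ f (A ω) ≤ b} := by
    apply measure_congr
    filter_upwards [hAB] with ω hω
    show (A ω ≤ a ∧ B ω ≤ b) = (A ω ≤ a ∧ f (A ω) ≤ b)
    rw [hω]
  have h2 : μ {ω | B ω ≤ b} = μ {ω | f (A ω) ≤ b} := by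
    apply measure_congr
    filter_upwards [hAB] with ω hω
    show (B ω ≤ b) = (f (A ω) ≤ b)
    rw [hω]
  have hS : IsLowerSet {x : ℝ | x ≤ a} := fun x y hyx hx => le_trans hyx hx
  have hT : IsLowerSet {x : ℝ | f x ≤ b} := fun x y hyx hx =>
    le_trans (hf.monotone hyx) hx
  have hne : μ {ω | A ω ≤ a} ≠ ⊤ := measure_ne_top μ _
  have hne' : μ {ω | B ω ≤ b} ≠ ⊤ := measure_ne_top μ _
  rcases hS.total hT with h | h
  · have hset : {ω | A ω ≤ a ∧ f (A ω) ≤ b} = {ω | A ω ≤ a} := by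
      ext ω; exact ⟨fun hx => hx.1, fun hx => ⟨hx, h hx⟩⟩
    have hle : μ {ω | A ω ≤ a} ≤ μ {ω | B ω ≤ b} := by
      rw [h2]; exact measure_mono fun ω hω => h hω
    rw [h1, hset, hΦA, hΦB, min_eq_left]
    exact ENNReal.toReal_mono hne' hle
  · have hset : {ω | A ω ≤ a ∧ f (A ω) ≤ b} = {ω | f (A ω) ≤ b} := by
      ext ω; exact ⟨fun hx => hx.2, fun hx => ⟨h hx, hx⟩⟩
    have hle : μ {ω | B ω ≤ b} ≤ μ {ω | A ω ≤ a} := by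
      rw [h2]; exact measure_mono fun ω hω => h hω
    rw [h1, hset, hΦA, hΦB, ← h2, min_eq_right]
    exact ENNReal.toReal_mono hne hle
end
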